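/- arXiv:2507.17468 — 2 statements merged into one kernel-verified Lean document; each statement's English description precedes it below -/
import Mathlib

section
/- Let Y be a nonnegative random variable with probability density p(y) = 2·E(X/√y − 1)₊ for y > 0, where X is a standard normal random variable and x₊ := max(x,0). Then for every u ≥ 1, P(Y ≥ u) ≤ √(2/π) ∫_u^∞ e^{−y/2} y^{−1/2} dy ≤ √(8/π) e^{−u/2}, and for every ρ > 0, P(Y ≤ ρ) ≤ √(8/π) ρ^{1/2}. -/
open MeasureTheory ProbabilityTheory Filter Set

noncomputable section

/-- `W` is a standard Brownian motion (Wiener process) under the probability measure `μ`. -/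
def IsStandardBM {Ω : Type*} [MeasurableSpace Ω] (μ : Measure Ω) (W : Ω → ℝ → ℝ) : Prop :=
  (∀ ω, W ω 0 = 0) ∧
  (∀ ω, Continuous fun t => W ω t) ∧
  (∀ t : ℝ, Measurable fun ω => W ω t) ∧
  (∀ s t : ℝ, 0 ≤ s → s ≤ t →
    Measure.map (fun ω => W ω t - W ω s) μ = gaussianReal 0 (Real.toNNReal (t - s))) ∧
  (∀ (n : ℕ) (t : ℕ → ℝ), Monotone t → (∀ i, 0 ≤ t i) →
    iIndepFun
      (fun i : Fin n => fun ω => W ω (t (i.val + 1)) - W ω (t i.val)) μ)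

/-- `h` is absolutely continuous on `[0,T]` with a.e. derivative `g`. -/
def HasIntegralDeriv (T : ℝ) (h g : ℝ → ℝ) : Prop :=
  IntegrableOn g (Icc 0 T) ∧ ∀ t ∈ Icc 0 T, h t = h 0 + ∫ s in (0:ℝ)..t, g s

/-- Energy `∫_0^T ψ(h'(t)) dt` of an absolutely continuous function with derivative `g`. -/
def energy (ψ : ℝ → ℝ) (T : ℝ) (g : ℝ → ℝ) : ℝ := ∫ t in Ioc (0:ℝ) T, ψ (g t)

/-- Minimal integral energy `I_w^ψ(T,r)` over absolutely continuous majorants of `w`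
starting at height `r`. -/
def minEnergy (ψ w : ℝ → ℝ) (T r : ℝ) : ℝ :=
  sInf {E : ℝ | ∃ h g : ℝ → ℝ, HasIntegralDeriv T h g ∧ h 0 = r ∧
    (∀ t ∈ Icc 0 T, w t ≤ h t) ∧ E = energy ψ T g}

def SlowlyVaryingAtTop (g : ℝ → ℝ) : Prop :=
  Measurable g ∧ (∀ᶠ b in atTop, 0 < g b) ∧
  ∀ c > 0, Tendsto (fun b => g (c * b) / g b) atTop (nhds 1)

def SlowlyVaryingAtZero (θ : ℝ → ℝ) : Prop :=
  Measurable θ ∧ (∀ᶠ u in nhdsWithin 0 (Ioi 0), 0 < θ u) ∧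
  ∀ c > 0, Tendsto (fun u => θ (c * u) / θ u) (nhdsWithin 0 (Ioi 0)) (nhds 1)

/-- Karamata representation `θ(u) = c(u) exp(∫_u^1 ε(v)/v dv)` on `(0,1)`, with `c` a positive
bounded measurable function having a nonzero limit at `0`, and `ε` bounded measurable with
limit `0` at `0`. -/
def KaramataRep (θ c ε : ℝ → ℝ) : Prop :=
  Measurable c ∧ Measurable ε ∧ (∀ u, 0 < c u) ∧ (∃ M : ℝ, ∀ u, c u ≤ M) ∧
  (∃ L : ℝ, L ≠ 0 ∧ Tendsto c (nhdsWithin 0 (Ioi 0)) (nhds L)) ∧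
  (∃ M : ℝ, ∀ u, |ε u| ≤ M) ∧ Tendsto ε (nhdsWithin 0 (Ioi 0)) (nhds 0) ∧
  ∀ u ∈ Ioo (0:ℝ) 1, θ u = c u * Real.exp (∫ v in Ioc u 1, ε v / v)

/-- `argmax_{t ∈ F} f := sup { t₀ ∈ F | f(t₀) = sup_{t ∈ F} f(t) }`. -/
def argmaxOn (f : ℝ → ℝ) (F : Set ℝ) : ℝ := sSup {t ∈ F | f t = sSup (f '' F)}

/-- The Groeneboom process `τ(a) = argmax_{t ≥ 0} (W(t) - t/a)`. -/
def tauProc {Ω : Type*} (W : Ω → ℝ → ℝ) (ω : Ω) (a : ℝ) : ℝ :=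
  argmaxOn (fun t => W ω t - t / a) (Ici 0)

open Classical in
/-- The Lebesgue–Stieltjes measure of a monotone function (zero if not monotone). -/
def lsMeasure (f : ℝ → ℝ) : Measure ℝ :=
  if hf : Monotone f then hf.stieltjesFunction.measure else 0

/-- Lebesgue–Stieltjes integral `∫_{(b₀,b]} g df`. -/
def lsIntegral (f g : ℝ → ℝ) (b₀ b : ℝ) : ℝ := ∫ a in Ioc b₀ b, g a ∂(lsMeasure f)

/-- `L_ψ(b₀,b) = ∫_{(b₀,b]} ψ(a⁻¹) dτ(a)`. -/
def Lpsi {Ω : Type*} (ψ : ℝ → ℝ) (W : Ω → ℝ → ℝ) (ω : Ω) (b₀ b : ℝ) : ℝ :=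
  lsIntegral (tauProc W ω) (fun a => ψ a⁻¹) b₀ b

/-- `m_ψ(b) = ∫_1^b a ψ(a⁻¹) da`. -/
def mPsi (ψ : ℝ → ℝ) (b : ℝ) : ℝ := ∫ a in Ioc (1:ℝ) b, a * ψ a⁻¹

/-- `P(ξ₁, ξ₂, b) = { ρ | (log b)^{-ξ₁} < ρ < (log b)^{-ξ₂} }`. -/
def Pset (ξ₁ ξ₂ b : ℝ) : Set ℝ := {ρ : ℝ | Real.log b ^ (-ξ₁) < ρ ∧ ρ < Real.log b ^ (-ξ₂)}

/-- The measure `μ₁ = 2 φ(z) s⁻¹ ds dz` on `(0,1] × (0,∞)`. -/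
def mu1 : Measure (ℝ × ℝ) :=
  ((volume.restrict (Ioc (0:ℝ) 1)).prod (volume.restrict (Ioi (0:ℝ)))).withDensity
    fun p => ENNReal.ofReal (2 * gaussianPDFReal 0 1 p.2 * p.1⁻¹)

/-- The pushforward `μ_{ψ,b}` of `μ₁` restricted to `{ s > b⁻¹ }` under
`(s,z) ↦ z² s^{2-κ} θ((sb)⁻¹)/θ(b⁻¹)`. -/
def muPsi (θ : ℝ → ℝ) (κ b : ℝ) : Measure ℝ :=
  Measure.map (fun p : ℝ × ℝ => p.2 ^ 2 * p.1 ^ (2 - κ) * (θ (p.1 * b)⁻¹ / θ b⁻¹))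
    (mu1.restrict {p : ℝ × ℝ | b⁻¹ < p.1})


section Aux

open Real

lemma pdf01_eq : gaussianPDFReal 0 1 = fun x => (Real.sqrt (2 * Real.pi))⁻¹ * Real.exp (-x ^ 2 / 2) := by
  ext x
  simp [gaussianPDFReal]

lemma integral_gauss_eq (g : ℝ → ℝ) :
    ∫ x, g x ∂(gaussianReal 0 1) = ∫ x, gaussianPDFReal 0 1 x * g x := by
  rw [gaussianReal_of_var_ne_zero 0 one_ne_zero,
    show gaussianPDF 0 1 = (fun x => (((gaussianPDFReal 0 1 x).toNNReal : NNReal) : ENNReal)) from rfl,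
    integral_withDensity_eq_integral_smul ((measurable_gaussianPDFReal 0 1).real_toNNReal) g]
  congr 1
  ext x
  rw [NNReal.smul_def, Real.coe_toNNReal _ (gaussianPDFReal_nonneg 0 1 x), smul_eq_mul]

lemma pdf01_nonneg (x : ℝ) : 0 ≤ gaussianPDFReal 0 1 x := gaussianPDFReal_nonneg 0 1 x

lemma hasDerivAt_anti (x : ℝ) :
    HasDerivAt (fun x : ℝ => -((Real.sqrt (2 * Real.pi))⁻¹ * Real.exp (-x ^ 2 / 2)))
      (x * gaussianPDFReal 0 1 x) x := by
  have h1 : HasDerivAt (fun x : ℝ => -x ^ 2 / 2) (-x) x := by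
    have := ((hasDerivAt_pow 2 x).neg.div_const 2)
    exact this.congr_deriv (by push_cast; ring)
  have h2 := ((h1.exp).const_mul ((Real.sqrt (2 * Real.pi))⁻¹)).neg
  exact h2.congr_deriv (by rw [pdf01_eq]; ring)

lemma tendsto_anti :
    Filter.Tendsto (fun x : ℝ => -((Real.sqrt (2 * Real.pi))⁻¹ * Real.exp (-x ^ 2 / 2)))
      atTop (nhds 0) := by
  have h1 : Filter.Tendsto (fun x : ℝ => -x ^ 2 / 2) atTop atBot := by
    apply Filter.Tendsto.atBot_div_const (by norm_num : (0:ℝ) < 2)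
    exact Filter.tendsto_neg_atBot_iff.mpr (tendsto_pow_atTop (by norm_num))
  have h2 := (Real.tendsto_exp_atBot.comp h1).const_mul ((Real.sqrt (2 * Real.pi))⁻¹)
  simpa using h2.neg

lemma integrableOn_x_pdf {a : ℝ} (ha : 0 ≤ a) :
    IntegrableOn (fun x => x * gaussianPDFReal 0 1 x) (Ioi a) volume := by
  refine integrableOn_Ioi_deriv_of_nonneg ?_ (fun x hx => hasDerivAt_anti x) ?_ tendsto_anti
  · exact (((continuous_const.mul (Real.continuous_exp.comp (by continuity))).neg).continuousWithinAt)
  · intro x hx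
    exact mul_nonneg (le_trans ha (le_of_lt hx)) (pdf01_nonneg x)

lemma integral_x_pdf {a : ℝ} (ha : 0 ≤ a) :
    ∫ x in Ioi a, x * gaussianPDFReal 0 1 x
      = (Real.sqrt (2 * Real.pi))⁻¹ * Real.exp (-a ^ 2 / 2) := by
  rw [integral_Ioi_of_hasDerivAt_of_nonneg
    (((continuous_const.mul (Real.continuous_exp.comp (by continuity))).neg).continuousWithinAt)
    (fun x hx => hasDerivAt_anti x)
    (fun x hx => mul_nonneg (le_trans ha (le_of_lt hx)) (pdf01_nonneg x)) tendsto_anti]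
  simp [Function.comp]

/-- Key bound: `∫ (x/a - 1)₊ dγ ≤ a⁻¹ (2π)^{-1/2} e^{-a²/2}`. -/
lemma key_bound {a : ℝ} (ha : 0 < a) :
    ∫ x, max (x / a - 1) 0 ∂(gaussianReal 0 1)
      ≤ a⁻¹ * ((Real.sqrt (2 * Real.pi))⁻¹ * Real.exp (-a ^ 2 / 2)) := by
  rw [integral_gauss_eq]
  have hle : ∀ x : ℝ, gaussianPDFReal 0 1 x * max (x / a - 1) 0
      ≤ (Ioi a).indicator (fun x => a⁻¹ * (x * gaussianPDFReal 0 1 x)) x := by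
    intro x
    by_cases hx : x ∈ Ioi a
    · rw [indicator_of_mem hx]
      have hxa : a < x := hx
      have h1 : max (x / a - 1) 0 ≤ x / a := by
        apply max_le
        · linarith [div_nonneg (le_trans ha.le hxa.le) ha.le]
        · exact div_nonneg (le_trans ha.le hxa.le) ha.le
      calc gaussianPDFReal 0 1 x * max (x / a - 1) 0
          ≤ gaussianPDFReal 0 1 x * (x / a) :=
            mul_le_mul_of_nonneg_left h1 (pdf01_nonneg x)
        _ = a⁻¹ * (x * gaussianPDFReal 0 1 x) := by ring
    · rw [indicator_of_notMem hx]
      have hxa : x ≤ a := not_lt.mp hx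
      have : max (x / a - 1) 0 = 0 := by
        apply max_eq_right
        have := (div_le_one ha).mpr hxa
        linarith
      rw [this, mul_zero]
  have hig : Integrable ((Ioi a).indicator (fun x => a⁻¹ * (x * gaussianPDFReal 0 1 x))) := by
    rw [integrable_indicator_iff measurableSet_Ioi]
    exact (integrableOn_x_pdf ha.le).const_mul _
  calc ∫ x, gaussianPDFReal 0 1 x * max (x / a - 1) 0
      ≤ ∫ x, (Ioi a).indicator (fun x => a⁻¹ * (x * gaussianPDFReal 0 1 x)) x :=
        integral_mono_of_nonneg
          (Filter.Eventually.of_forall fun x =>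
            mul_nonneg (pdf01_nonneg x) (le_max_right _ _))
          hig (Filter.Eventually.of_forall hle)
    _ = ∫ x in Ioi a, a⁻¹ * (x * gaussianPDFReal 0 1 x) :=
        integral_indicator measurableSet_Ioi
    _ = a⁻¹ * ∫ x in Ioi a, x * gaussianPDFReal 0 1 x := integral_const_mul _ _
    _ = a⁻¹ * ((Real.sqrt (2 * Real.pi))⁻¹ * Real.exp (-a ^ 2 / 2)) := by
        rw [integral_x_pdf ha.le]

lemma sqrt_two_pi_pos : 0 < Real.sqrt (2 * Real.pi) :=
  Real.sqrt_pos.mpr (by positivity)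

lemma two_mul_inv_sqrt : 2 * (Real.sqrt (2 * Real.pi))⁻¹ = Real.sqrt (2 / Real.pi) := by
  have hπ : 0 < Real.pi := Real.pi_pos
  have h : Real.sqrt (2 / Real.pi) * Real.sqrt (2 * Real.pi) = 2 := by
    rw [← Real.sqrt_mul (by positivity)]
    rw [show 2 / Real.pi * (2 * Real.pi) = 2 ^ 2 by field_simp]
    exact Real.sqrt_sq (by norm_num)
  calc 2 * (Real.sqrt (2 * Real.pi))⁻¹
      = (Real.sqrt (2 / Real.pi) * Real.sqrt (2 * Real.pi)) * (Real.sqrt (2 * Real.pi))⁻¹ := by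
        rw [h]
    _ = Real.sqrt (2 / Real.pi) := by
        rw [mul_assoc, mul_inv_cancel₀ sqrt_two_pi_pos.ne', mul_one]

lemma sqrt_eight_pi : Real.sqrt (8 / Real.pi) = 2 * Real.sqrt (2 / Real.pi) := by
  rw [show (8 : ℝ) / Real.pi = 2 ^ 2 * (2 / Real.pi) by ring,
    Real.sqrt_mul (by positivity), Real.sqrt_sq (by norm_num)]

/-- Density bound for `y > 0`. -/
lemma density_bound {y : ℝ} (hy : 0 < y) :
    2 * ∫ x, max (x / Real.sqrt y - 1) 0 ∂(gaussianReal 0 1)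
      ≤ Real.sqrt (2 / Real.pi) * (Real.exp (-y / 2) * y ^ (-(1:ℝ) / 2)) := by
  have hsy : 0 < Real.sqrt y := Real.sqrt_pos.mpr hy
  have h := key_bound hsy
  have h2 : (Real.sqrt y) ^ 2 = y := Real.sq_sqrt hy.le
  have hr : (Real.sqrt y)⁻¹ = y ^ (-(1:ℝ) / 2) := by
    rw [Real.sqrt_eq_rpow, ← Real.rpow_neg hy.le]
    norm_num
  calc 2 * ∫ x, max (x / Real.sqrt y - 1) 0 ∂(gaussianReal 0 1)
      ≤ 2 * ((Real.sqrt y)⁻¹ * ((Real.sqrt (2 * Real.pi))⁻¹ * Real.exp (-(Real.sqrt y) ^ 2 / 2))) := by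
        linarith [h]
    _ = Real.sqrt (2 / Real.pi) * (Real.exp (-y / 2) * y ^ (-(1:ℝ) / 2)) := by
        rw [h2, ← hr, ← two_mul_inv_sqrt]
        ring

open intervalIntegral in
lemma rpow_int_Ioc {ρ : ℝ} (hρ : 0 < ρ) :
    IntegrableOn (fun y : ℝ => y ^ (-(1:ℝ) / 2)) (Ioc 0 ρ) volume := by
  have := (intervalIntegrable_rpow' (a := 0) (b := ρ) (r := -(1:ℝ)/2) (by norm_num)).1
  simpa [uIoc_of_le hρ.le] using this

open intervalIntegral in
lemma rpow_val_Ioc {ρ : ℝ} (hρ : 0 < ρ) :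
    ∫ y in Ioc 0 ρ, y ^ (-(1:ℝ) / 2) = 2 * ρ ^ ((1:ℝ) / 2) := by
  rw [← intervalIntegral.integral_of_le hρ.le,
    integral_rpow (Or.inl (by norm_num : (-1:ℝ) < -(1:ℝ)/2))]
  rw [Real.zero_rpow (by norm_num : -(1:ℝ)/2 + 1 ≠ 0)]
  rw [show -(1:ℝ)/2 + 1 = 1/2 by norm_num]
  ring

lemma pdens_if (y : ℝ) :
    (if 0 < y then 2 * ∫ x, max (x / Real.sqrt y - 1) 0 ∂(gaussianReal 0 1) else 0)
      = (if 0 < y then 2 * ∫ x, max (x / Real.sqrt y - 1) 0 ∂(gaussianReal 0 1) else 0) := rfl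

end Aux

/-- **Tail bounds for the Groeneboom density.** If `Y ≥ 0` has density
`p(y) = 2 E(X/√y - 1)₊` with `X` standard normal, then for `u ≥ 1`,
`P(Y ≥ u) ≤ √(2/π) ∫_u^∞ e^{-y/2} y^{-1/2} dy ≤ √(8/π) e^{-u/2}`, and for `ρ > 0`,
`P(Y ≤ ρ) ≤ √(8/π) ρ^{1/2}`. -/
theorem groeneboom_density_tail_bounds
    {Ω : Type*} [MeasurableSpace Ω] (μ : Measure Ω) [IsProbabilityMeasure μ]
    (Y : Ω → ℝ) (hYnn : ∀ ω, 0 ≤ Y ω) (hYmeas : Measurable Y)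
    (hdens : Measure.map Y μ = volume.withDensity (fun y : ℝ =>
      ENNReal.ofReal (if 0 < y then
        2 * ∫ x, max (x / Real.sqrt y - 1) 0 ∂(gaussianReal 0 1) else 0))) :
    (∀ u : ℝ, 1 ≤ u →
      (μ {ω | u ≤ Y ω}).toReal ≤
          Real.sqrt (2 / Real.pi) * ∫ y in Ioi u, Real.exp (-y / 2) * y ^ (-(1:ℝ) / 2) ∧
        Real.sqrt (2 / Real.pi) * (∫ y in Ioi u, Real.exp (-y / 2) * y ^ (-(1:ℝ) / 2)) ≤
          Real.sqrt (8 / Real.pi) * Real.exp (-u / 2)) ∧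
    (∀ ρ : ℝ, 0 < ρ →
      (μ {ω | Y ω ≤ ρ}).toReal ≤ Real.sqrt (8 / Real.pi) * ρ ^ ((1:ℝ) / 2)) := by
  have hmap : ∀ s : Set ℝ, MeasurableSet s →
      μ (Y ⁻¹' s) = ∫⁻ y in s, ENNReal.ofReal (if 0 < y then 2 * ∫ x, max (x / Real.sqrt y - 1) 0 ∂(gaussianReal 0 1) else 0) := by
    intro s hs
    rw [← Measure.map_apply hYmeas hs, hdens, withDensity_apply _ hs]
  have hq0meas : Measurable fun y : ℝ => Real.exp (-y / 2) * y ^ (-(1:ℝ) / 2) := by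
    fun_prop
  constructor
  · intro u hu
    have hu0 : (0:ℝ) < u := lt_of_lt_of_le one_pos hu
    -- integrability of exp(-y/2) on Ioi u
    have hexp_int : IntegrableOn (fun y : ℝ => Real.exp (-y / 2)) (Ioi u) volume := by
      have := exp_neg_integrableOn_Ioi u (by norm_num : (0:ℝ) < 1/2)
      apply this.congr_fun ?_ measurableSet_Ioi
      intro y hy
      norm_num
      ring_nf
    have hexp_val : ∫ y in Ioi u, Real.exp (-y / 2) = 2 * Real.exp (-u / 2) := by
      have hderiv : ∀ y ∈ Ioi u, HasDerivAt (fun y : ℝ => -(2 * Real.exp (-y / 2)))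
          (Real.exp (-y / 2)) y := by
        intro y hy
        have h1 : HasDerivAt (fun y : ℝ => -y / 2) (-(1/2)) y := by
          have := (hasDerivAt_id y).neg.div_const 2
          exact this.congr_deriv (by norm_num)
        have h2 := (h1.exp.const_mul (2:ℝ)).neg
        exact h2.congr_deriv (by ring)
      have hcont : ContinuousWithinAt (fun y : ℝ => -(2 * Real.exp (-y / 2))) (Ici u) u := by
        apply Continuous.continuousWithinAt
        continuity
      have htend : Filter.Tendsto (fun y : ℝ => -(2 * Real.exp (-y / 2))) atTop (nhds 0) := by
        have h1 : Filter.Tendsto (fun y : ℝ => -y / 2) atTop atBot :=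
          Filter.Tendsto.atBot_div_const (by norm_num)
            (Filter.tendsto_neg_atBot_iff.mpr Filter.tendsto_id)
        have h2 := (Real.tendsto_exp_atBot.comp h1).const_mul (2:ℝ)
        simpa using h2.neg
      rw [integral_Ioi_of_hasDerivAt_of_nonneg hcont hderiv
        (fun y hy => (Real.exp_pos _).le) htend]
      ring
    have hq0_int : IntegrableOn (fun y : ℝ => Real.exp (-y / 2) * y ^ (-(1:ℝ) / 2))
        (Ioi u) volume := by
      apply Integrable.mono hexp_int hq0meas.aestronglyMeasurable.restrict
      rw [ae_restrict_iff' measurableSet_Ioi]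
      apply Filter.Eventually.of_forall
      intro y hy
      have hy1 : (1:ℝ) ≤ y := le_trans hu (le_of_lt hy)
      have h1 : y ^ (-(1:ℝ) / 2) ≤ 1 :=
        Real.rpow_le_one_of_one_le_of_nonpos hy1 (by norm_num)
      have h0 : 0 ≤ y ^ (-(1:ℝ) / 2) := Real.rpow_nonneg (by linarith) _
      rw [Real.norm_eq_abs, Real.norm_eq_abs, abs_of_nonneg (by positivity),
        abs_of_nonneg (Real.exp_nonneg _)]
      calc Real.exp (-y / 2) * y ^ (-(1:ℝ) / 2) ≤ Real.exp (-y / 2) * 1 :=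
            mul_le_mul_of_nonneg_left h1 (Real.exp_nonneg _)
        _ = Real.exp (-y / 2) := mul_one _
    have hq0_nonneg : ∀ y ∈ Ioi u, (0:ℝ) ≤ Real.exp (-y / 2) * y ^ (-(1:ℝ) / 2) := by
      intro y hy
      have : (0:ℝ) < y := lt_trans hu0 hy
      positivity
    have key : μ {ω | u ≤ Y ω} ≤ ENNReal.ofReal
        (Real.sqrt (2 / Real.pi) * ∫ y in Ioi u, Real.exp (-y / 2) * y ^ (-(1:ℝ) / 2)) := by
      have h1 : μ {ω | u ≤ Y ω} = ∫⁻ y in Ici u, ENNReal.ofReal (if 0 < y then 2 * ∫ x, max (x / Real.sqrt y - 1) 0 ∂(gaussianReal 0 1) else 0) :=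
        hmap (Ici u) measurableSet_Ici
      rw [h1, ← setLIntegral_congr (Ioi_ae_eq_Ici (a := u))]
      calc ∫⁻ y in Ioi u, ENNReal.ofReal (if 0 < y then 2 * ∫ x, max (x / Real.sqrt y - 1) 0 ∂(gaussianReal 0 1) else 0)
          ≤ ∫⁻ y in Ioi u, ENNReal.ofReal
              (Real.sqrt (2 / Real.pi) * (Real.exp (-y / 2) * y ^ (-(1:ℝ) / 2))) := by
            apply setLIntegral_mono (by fun_prop)
            intro y hy
            have hy0 : 0 < y := lt_trans hu0 hy
            apply ENNReal.ofReal_le_ofReal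
            rw [if_pos hy0]
            exact density_bound hy0
        _ = ENNReal.ofReal (∫ y in Ioi u,
              Real.sqrt (2 / Real.pi) * (Real.exp (-y / 2) * y ^ (-(1:ℝ) / 2))) := by
            rw [ofReal_integral_eq_lintegral_ofReal (hq0_int.const_mul _)
              ((ae_restrict_iff' measurableSet_Ioi).mpr (Filter.Eventually.of_forall
                fun y hy => mul_nonneg (Real.sqrt_nonneg _) (hq0_nonneg y hy)))]
        _ = ENNReal.ofReal (Real.sqrt (2 / Real.pi) * ∫ y in Ioi u,
              Real.exp (-y / 2) * y ^ (-(1:ℝ) / 2)) := by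
            rw [integral_const_mul]
    have hrhs_nonneg : 0 ≤ Real.sqrt (2 / Real.pi) *
        ∫ y in Ioi u, Real.exp (-y / 2) * y ^ (-(1:ℝ) / 2) :=
      mul_nonneg (Real.sqrt_nonneg _) (setIntegral_nonneg measurableSet_Ioi hq0_nonneg)
    refine ⟨ENNReal.toReal_le_of_le_ofReal hrhs_nonneg key, ?_⟩
    have h2 : ∫ y in Ioi u, Real.exp (-y / 2) * y ^ (-(1:ℝ) / 2)
        ≤ ∫ y in Ioi u, Real.exp (-y / 2) := by
      apply setIntegral_mono_on hq0_int hexp_int measurableSet_Ioi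
      intro y hy
      have hy1 : (1:ℝ) ≤ y := le_trans hu (le_of_lt hy)
      calc Real.exp (-y / 2) * y ^ (-(1:ℝ) / 2) ≤ Real.exp (-y / 2) * 1 :=
            mul_le_mul_of_nonneg_left
              (Real.rpow_le_one_of_one_le_of_nonpos hy1 (by norm_num)) (Real.exp_nonneg _)
        _ = Real.exp (-y / 2) := mul_one _
    calc Real.sqrt (2 / Real.pi) * ∫ y in Ioi u, Real.exp (-y / 2) * y ^ (-(1:ℝ) / 2)
        ≤ Real.sqrt (2 / Real.pi) * (2 * Real.exp (-u / 2)) := by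
          rw [← hexp_val]
          exact mul_le_mul_of_nonneg_left h2 (Real.sqrt_nonneg _)
      _ = Real.sqrt (8 / Real.pi) * Real.exp (-u / 2) := by
          rw [sqrt_eight_pi]; ring
  · intro ρ hρ
    have h1 : μ {ω | Y ω ≤ ρ} = ∫⁻ y in Iic ρ, ENNReal.ofReal (if 0 < y then 2 * ∫ x, max (x / Real.sqrt y - 1) 0 ∂(gaussianReal 0 1) else 0) :=
      hmap (Iic ρ) measurableSet_Iic
    have hsplit : ∫⁻ y in Iic ρ, ENNReal.ofReal (if 0 < y then 2 * ∫ x, max (x / Real.sqrt y - 1) 0 ∂(gaussianReal 0 1) else 0)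
        = (∫⁻ y in Iic 0, ENNReal.ofReal (if 0 < y then 2 * ∫ x, max (x / Real.sqrt y - 1) 0 ∂(gaussianReal 0 1) else 0)) + ∫⁻ y in Ioc 0 ρ, ENNReal.ofReal (if 0 < y then 2 * ∫ x, max (x / Real.sqrt y - 1) 0 ∂(gaussianReal 0 1) else 0) := by
      have hu := lintegral_union (μ := volume)
        (f := fun y : ℝ => ENNReal.ofReal (if 0 < y then 2 * ∫ x, max (x / Real.sqrt y - 1) 0 ∂(gaussianReal 0 1) else 0))
        (measurableSet_Ioc (a := (0:ℝ)) (b := ρ)) (Iic_disjoint_Ioc (le_refl (0:ℝ)))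
      rw [Iic_union_Ioc_eq_Iic hρ.le] at hu
      exact hu
    have hzero : ∫⁻ y in Iic 0, ENNReal.ofReal (if 0 < y then 2 * ∫ x, max (x / Real.sqrt y - 1) 0 ∂(gaussianReal 0 1) else 0) = 0 := by
      rw [setLIntegral_congr_fun_ae measurableSet_Iic
        ((Filter.Eventually.of_forall (p := fun y : ℝ => y ∈ Iic (0:ℝ) → ENNReal.ofReal (if 0 < y then 2 * ∫ x, max (x / Real.sqrt y - 1) 0 ∂(gaussianReal 0 1) else 0)
        = (fun _ => (0:ENNReal)) y)) fun y hy => by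
          rw [if_neg (not_lt.mpr hy)]; simp)]
      simp
    have hrpow_int : IntegrableOn (fun y : ℝ => y ^ (-(1:ℝ) / 2)) (Ioc 0 ρ) volume :=
      rpow_int_Ioc hρ
    have hrpow_val : ∫ y in Ioc 0 ρ, y ^ (-(1:ℝ) / 2) = 2 * ρ ^ ((1:ℝ) / 2) :=
      rpow_val_Ioc hρ
    have hbound : ∫⁻ y in Ioc 0 ρ, ENNReal.ofReal (if 0 < y then 2 * ∫ x, max (x / Real.sqrt y - 1) 0 ∂(gaussianReal 0 1) else 0)
        ≤ ENNReal.ofReal (Real.sqrt (8 / Real.pi) * ρ ^ ((1:ℝ) / 2)) := by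
      calc ∫⁻ y in Ioc 0 ρ, ENNReal.ofReal (if 0 < y then 2 * ∫ x, max (x / Real.sqrt y - 1) 0 ∂(gaussianReal 0 1) else 0)
          ≤ ∫⁻ y in Ioc 0 ρ, ENNReal.ofReal
              (Real.sqrt (2 / Real.pi) * y ^ (-(1:ℝ) / 2)) := by
            apply setLIntegral_mono (by fun_prop)
            intro y hy
            apply ENNReal.ofReal_le_ofReal
            rw [if_pos hy.1]
            calc 2 * ∫ x, max (x / Real.sqrt y - 1) 0 ∂(gaussianReal 0 1)
                ≤ Real.sqrt (2 / Real.pi) * (Real.exp (-y / 2) * y ^ (-(1:ℝ) / 2)) :=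
                  density_bound hy.1
              _ ≤ Real.sqrt (2 / Real.pi) * y ^ (-(1:ℝ) / 2) := by
                  apply mul_le_mul_of_nonneg_left _ (Real.sqrt_nonneg _)
                  apply mul_le_of_le_one_left (Real.rpow_nonneg hy.1.le _)
                  exact Real.exp_le_one_iff.mpr (by linarith [hy.1])
        _ = ENNReal.ofReal (∫ y in Ioc 0 ρ,
              Real.sqrt (2 / Real.pi) * y ^ (-(1:ℝ) / 2)) := by
            rw [ofReal_integral_eq_lintegral_ofReal (hrpow_int.const_mul _)
              ((ae_restrict_iff' measurableSet_Ioc).mpr (Filter.Eventually.of_forall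
                fun y hy => mul_nonneg (Real.sqrt_nonneg _) (Real.rpow_nonneg hy.1.le _)))]
        _ = ENNReal.ofReal (Real.sqrt (8 / Real.pi) * ρ ^ ((1:ℝ) / 2)) := by
            rw [integral_const_mul, hrpow_val, sqrt_eight_pi]
            ring_nf
    apply ENNReal.toReal_le_of_le_ofReal
      (mul_nonneg (Real.sqrt_nonneg _) (Real.rpow_nonneg hρ.le _))
    rw [h1, hsplit, hzero, zero_add]
    exact hbound
end
end

section
/- Let T > 0, let w : [0,T] → ℝ be continuous, and let r be a real number with w(0) < r < M, where M := max_{t ∈ [0,T]} w(t). Then inf{ ∫_0^T max(h′(t), 0) dt : h absolutely continuous on [0,T], h(0) = r, h(t) ≥ w(t) for all t ∈ [0,T] } = M − r. -/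
open MeasureTheory ProbabilityTheory Filter Set

noncomputable section

/-- **Hirsch-type identity.** For `w` continuous on `[0,T]` and `w(0) < r < M = max w`,
the minimal value of `∫_0^T max(h'(t),0) dt` over absolutely continuous majorants `h` of `w`
with `h(0) = r` equals `M - r`. -/
theorem minimal_positive_variation_of_majorants
    (T : ℝ) (hT : 0 < T) (w : ℝ → ℝ) (hw : ContinuousOn w (Icc 0 T))
    (r M : ℝ) (hM : M = sSup (w '' Icc 0 T)) (hr1 : w 0 < r) (hr2 : r < M) :
    sInf {E : ℝ | ∃ h g : ℝ → ℝ, HasIntegralDeriv T h g ∧ h 0 = r ∧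
      (∀ t ∈ Icc 0 T, w t ≤ h t) ∧ E = ∫ t in Ioc (0:ℝ) T, max (g t) 0} = M - r := by
  -- Preliminaries about the maximum
  have hcomp : IsCompact (w '' Icc 0 T) :=
    (isCompact_Icc).image_of_continuousOn hw
  have hne : (w '' Icc 0 T).Nonempty := ⟨w 0, ⟨0, ⟨le_refl 0, hT.le⟩, rfl⟩⟩
  have hMmem : M ∈ w '' Icc 0 T := by
    rw [hM]; exact hcomp.sSup_mem hne
  obtain ⟨tstar, htstar, hwstar⟩ := hMmem
  have hwleM : ∀ t ∈ Icc 0 T, w t ≤ M := by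
    intro t ht
    rw [hM]
    exact le_csSup hcomp.bddAbove ⟨t, ht, rfl⟩
  -- choose δ > 0, δ ≤ T with w < r on [0, δ]
  have hw0 : ContinuousWithinAt w (Icc 0 T) 0 := hw 0 ⟨le_refl 0, hT.le⟩
  have hev : ∀ᶠ t in nhdsWithin 0 (Icc 0 T), w t < r :=
    hw0.eventually (Filter.Tendsto.eventually_lt_const hr1 tendsto_id) |>.mono (fun t ht => ht)
  rw [eventually_nhdsWithin_iff, Metric.eventually_nhds_iff] at hev
  obtain ⟨ε, hε, hevε⟩ := hev
  set δ : ℝ := min (ε / 2) T with hδdef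
  have hδpos : 0 < δ := lt_min (by linarith) hT
  have hδT : δ ≤ T := min_le_right _ _
  have hwr : ∀ t ∈ Icc (0:ℝ) δ, w t < r := by
    intro t ht
    apply hevε
    · rw [Real.dist_eq, sub_zero, abs_of_nonneg ht.1]
      exact lt_of_le_of_lt ht.2 (lt_of_le_of_lt (min_le_left _ _) (by linarith))
    · exact ⟨ht.1, le_trans ht.2 hδT⟩
  -- the candidate
  set c : ℝ := (M - r) / δ with hcdef
  have hc0 : 0 ≤ c := div_nonneg (by linarith) hδpos.le
  set g : ℝ → ℝ := (Ioc (0:ℝ) δ).indicator (fun _ => c) with hgdef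
  set h : ℝ → ℝ := fun t => r + c * min t δ with hhdef
  have hg0 : ∀ s, 0 ≤ g s := fun s => indicator_nonneg (fun _ _ => hc0) s
  have hgint : Integrable g := by
    rw [hgdef, integrable_indicator_iff measurableSet_Ioc]
    exact (integrableOn_const_iff (C := c)).2 (Or.inr (by rw [Real.volume_Ioc]; exact ENNReal.ofReal_lt_top))
  have hgival : ∀ t : ℝ, 0 ≤ t → (∫ s in (0:ℝ)..t, g s) = c * min t δ := by
    intro t ht
    rw [intervalIntegral.integral_of_le ht, hgdef,
      setIntegral_indicator measurableSet_Ioc, Ioc_inter_Ioc, setIntegral_const,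
      smul_eq_mul, Real.volume_real_Ioc]
    rw [show (0:ℝ) ⊔ 0 = 0 from sup_idem 0, sub_zero,
      max_eq_left (le_min ht hδpos.le)]
    ring
  have hh0 : h 0 = r := by
    simp [hhdef, min_eq_left hδpos.le]
  have hhid : HasIntegralDeriv T h g := by
    refine ⟨hgint.integrableOn, fun t ht => ?_⟩
    rw [hgival t ht.1, hh0, hhdef]
  have hmaj : ∀ t ∈ Icc 0 T, w t ≤ h t := by
    intro t ht
    by_cases htδ : t ≤ δ
    · have : r ≤ h t := by
        have : 0 ≤ c * min t δ := mul_nonneg hc0 (le_min ht.1 hδpos.le)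
        simp only [hhdef]; linarith
      exact le_trans (hwr t ⟨ht.1, htδ⟩).le this
    · have : h t = M := by
        simp only [hhdef, min_eq_right (le_of_not_ge htδ), hcdef]
        field_simp
        ring
      rw [this]
      exact hwleM t ht
  have hEval : (∫ t in Ioc (0:ℝ) T, max (g t) 0) = M - r := by
    have : ∀ t, max (g t) 0 = g t := fun t => max_eq_left (hg0 t)
    simp_rw [this]
    have := hgival T hT.le
    rw [intervalIntegral.integral_of_le hT.le] at this
    rw [this, min_eq_right hδT, hcdef]
    field_simp
  -- lower bound
  have hlb : ∀ E ∈ {E : ℝ | ∃ h g : ℝ → ℝ, HasIntegralDeriv T h g ∧ h 0 = r ∧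
      (∀ t ∈ Icc 0 T, w t ≤ h t) ∧ E = ∫ t in Ioc (0:ℝ) T, max (g t) 0}, M - r ≤ E := by
    rintro E ⟨h', g', ⟨hgi', hrep⟩, hh0', hmaj', rfl⟩
    have hsub : Ioc (0:ℝ) tstar ⊆ Icc 0 T :=
      fun x hx => ⟨hx.1.le, le_trans hx.2 htstar.2⟩
    have hgi'' : IntegrableOn g' (Ioc 0 tstar) := hgi'.mono_set hsub
    have hmaxint : IntegrableOn (fun t => max (g' t) 0) (Icc 0 T) := hgi'.pos_part
    have h1 : M ≤ r + ∫ s in Ioc (0:ℝ) tstar, g' s := by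
      have := hmaj' tstar htstar
      rw [hwstar] at this
      rw [hrep tstar htstar, hh0', intervalIntegral.integral_of_le htstar.1] at this
      exact this
    have h2 : (∫ s in Ioc (0:ℝ) tstar, g' s) ≤ ∫ s in Ioc (0:ℝ) tstar, max (g' s) 0 :=
      setIntegral_mono_on hgi'' (hmaxint.mono_set hsub) measurableSet_Ioc
        (fun x _ => le_max_left _ _)
    have h3 : (∫ s in Ioc (0:ℝ) tstar, max (g' s) 0) ≤ ∫ s in Ioc (0:ℝ) T, max (g' s) 0 := by
      apply setIntegral_mono_set (hmaxint.mono_set Ioc_subset_Icc_self)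
      · exact Filter.Eventually.of_forall (fun x => le_max_right _ _)
      · exact HasSubset.Subset.eventuallyLE (Ioc_subset_Ioc_right htstar.2)
    linarith
  refine le_antisymm ?_ ?_
  · exact csInf_le ⟨M - r, hlb⟩ ⟨h, g, hhid, hh0, hmaj, hEval.symm⟩
  · exact le_csInf ⟨M - r, h, g, hhid, hh0, hmaj, hEval.symm⟩ hlb
end
end
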